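/- arXiv:1606.03078 — 4 statements merged into one kernel-verified Lean document; each statement's English description precedes it below -/
import Mathlib

section
/- Let E be a real inner product space and let H : E → E be a symmetric linear map (⟨H u, v⟩ = ⟨u, H v⟩ for all u, v) satisfying ⟨H z, z⟩ ≤ 3‖z‖² for all z ∈ E. Then for every Y ∈ E, setting J̄ = Y − (1/2) H Y, one has ⟨J̄, J̄⟩ + ⟨H J̄, J̄⟩ ≤ ‖Y‖². -/
open RealInnerProductSpace

/-- Pointwise content of Lemma 3.2: if the symmetric map `H` satisfies
`⟨H z, z⟩ ≤ 3‖z‖²`, then with `J̄ = Y - (1/2) H Y` one has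
`⟨J̄,J̄⟩ + ⟨H J̄, J̄⟩ ≤ ‖Y‖²`. -/
theorem stmt_1 {E : Type*} [NormedAddCommGroup E] [InnerProductSpace ℝ E]
    (H : E →ₗ[ℝ] E) (hsymm : ∀ u v : E, ⟪H u, v⟫ = ⟪u, H v⟫)
    (hbound : ∀ z : E, ⟪H z, z⟫ ≤ 3 * ‖z‖ ^ 2) (Y : E) :
    ⟪Y - (1 / 2 : ℝ) • H Y, Y - (1 / 2 : ℝ) • H Y⟫
        + ⟪H (Y - (1 / 2 : ℝ) • H Y), Y - (1 / 2 : ℝ) • H Y⟫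
      ≤ ‖Y‖ ^ 2 := by
  have hb := hbound (H Y)
  have h1 : ⟪H (H Y), Y⟫ = ⟪H Y, H Y⟫ := hsymm (H Y) Y
  have h2 : ⟪H Y, H Y⟫ = ‖H Y‖ ^ 2 := real_inner_self_eq_norm_sq _
  have h3 : ⟪Y, Y⟫ = ‖Y‖ ^ 2 := real_inner_self_eq_norm_sq _
  have h4 : ⟪H Y, Y⟫ = ⟪Y, H Y⟫ := hsymm Y Y ▸ rfl
  simp only [map_sub, map_smul, inner_sub_left, inner_sub_right,
    real_inner_smul_left, real_inner_smul_right]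
  nlinarith [hb, h1, h2, h3, h4, real_inner_comm (H Y) Y,
    real_inner_comm (H (H Y)) Y]
end

section
/- Let V be a real vector space, let g₁ and g₂ be symmetric positive semidefinite bilinear forms on V, let χ ∈ [0,1], and set g = χ·g₁ + (1−χ)·g₂. For a symmetric positive semidefinite bilinear form B write |v|_B = √(B(v,v)). Let J₁, J₂ ∈ V and let c₁, c₂ ≥ 0 satisfy (g₂ − g₁)(v,v) ≤ c₁·g₁(v,v) and (g₁ − g₂)(v,v) ≤ c₂·g₂(v,v) for all v ∈ V. Then |χ J₁ + (1−χ) J₂|_g ≤ χ|J₁|_{g₁} + (1−χ)|J₂|_{g₂} + χ(1−χ)·(c₁|J₁|_{g₁} + c₂|J₂|_{g₂}). -/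
private lemma psd_cs {V : Type*} [AddCommGroup V] [Module ℝ V]
    (B : V →ₗ[ℝ] V →ₗ[ℝ] ℝ) (hs : ∀ v w : V, B v w = B w v)
    (hp : ∀ v : V, 0 ≤ B v v) (a b : V) :
    (B a b) ^ 2 ≤ B a a * B b b := by
  have h : ∀ t : ℝ, 0 ≤ B b b * (t * t) + (2 * B a b) * t + B a a := by
    intro t
    have h0 := hp (a + t • b)
    simp only [map_add, map_smul, LinearMap.add_apply, LinearMap.smul_apply,
      smul_eq_mul] at h0
    rw [hs b a] at h0
    ring_nf at h0 ⊢
    linarith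
  have hd := discrim_le_zero h
  rw [discrim] at hd
  nlinarith

private lemma psd_triangle {V : Type*} [AddCommGroup V] [Module ℝ V]
    (B : V →ₗ[ℝ] V →ₗ[ℝ] ℝ) (hs : ∀ v w : V, B v w = B w v)
    (hp : ∀ v : V, 0 ≤ B v v) (a b : V) :
    Real.sqrt (B (a + b) (a + b)) ≤ Real.sqrt (B a a) + Real.sqrt (B b b) := by
  have hcs := psd_cs B hs hp a b
  have hab : B a b ≤ Real.sqrt (B a a) * Real.sqrt (B b b) := by
    have h1 : B a b ≤ Real.sqrt ((B a b) ^ 2) := by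
      rw [Real.sqrt_sq_eq_abs]; exact le_abs_self _
    refine h1.trans ?_
    rw [← Real.sqrt_mul (hp a)]
    exact Real.sqrt_le_sqrt hcs
  have hexp : B (a + b) (a + b) = B a a + 2 * B a b + B b b := by
    simp only [map_add, LinearMap.add_apply]
    rw [hs b a]; ring
  have h2 : Real.sqrt (B (a + b) (a + b)) ≤
      Real.sqrt ((Real.sqrt (B a a) + Real.sqrt (B b b)) ^ 2) := by
    apply Real.sqrt_le_sqrt
    rw [hexp]
    nlinarith [Real.sq_sqrt (hp a), Real.sq_sqrt (hp b)]
  rwa [Real.sqrt_sq (by positivity)] at h2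

set_option maxHeartbeats 1000000 in
/-- Pointwise interpolation inequality of Lemma 3.5 (equation (3.2)). -/
theorem stmt_2 {V : Type*} [AddCommGroup V] [Module ℝ V]
    (g₁ g₂ : V →ₗ[ℝ] V →ₗ[ℝ] ℝ)
    (hsymm₁ : ∀ v w : V, g₁ v w = g₁ w v) (hsymm₂ : ∀ v w : V, g₂ v w = g₂ w v)
    (hpsd₁ : ∀ v : V, 0 ≤ g₁ v v) (hpsd₂ : ∀ v : V, 0 ≤ g₂ v v)
    (χ : ℝ) (hχ0 : 0 ≤ χ) (hχ1 : χ ≤ 1)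
    (J₁ J₂ : V) (c₁ c₂ : ℝ) (hc₁ : 0 ≤ c₁) (hc₂ : 0 ≤ c₂)
    (h₁ : ∀ v : V, g₂ v v - g₁ v v ≤ c₁ * g₁ v v)
    (h₂ : ∀ v : V, g₁ v v - g₂ v v ≤ c₂ * g₂ v v) :
    Real.sqrt ((χ • g₁ + (1 - χ) • g₂) (χ • J₁ + (1 - χ) • J₂) (χ • J₁ + (1 - χ) • J₂))
      ≤ χ * Real.sqrt (g₁ J₁ J₁) + (1 - χ) * Real.sqrt (g₂ J₂ J₂)
        + χ * (1 - χ) * (c₁ * Real.sqrt (g₁ J₁ J₁) + c₂ * Real.sqrt (g₂ J₂ J₂)) := by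
  set g := χ • g₁ + (1 - χ) • g₂ with hg
  have hχ1' : 0 ≤ 1 - χ := by linarith
  have hgeval : ∀ v w : V, g v w = χ * g₁ v w + (1 - χ) * g₂ v w := by
    intro v w
    simp [hg, smul_eq_mul]
  have hgs : ∀ v w : V, g v w = g w v := by
    intro v w; rw [hgeval, hgeval, hsymm₁, hsymm₂]
  have hgp : ∀ v : V, 0 ≤ g v v := by
    intro v; rw [hgeval]
    have := hpsd₁ v; have := hpsd₂ v; nlinarith
  have htri := psd_triangle g hgs hgp (χ • J₁) ((1 - χ) • J₂)
  have hsq1 : Real.sqrt (g (χ • J₁) (χ • J₁)) = χ * Real.sqrt (g J₁ J₁) := by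
    have h : g (χ • J₁) (χ • J₁) = χ ^ 2 * g J₁ J₁ := by
      simp only [map_smul, LinearMap.smul_apply, smul_eq_mul]; ring
    rw [h, Real.sqrt_mul (by positivity), Real.sqrt_sq hχ0]
  have hsq2 : Real.sqrt (g ((1 - χ) • J₂) ((1 - χ) • J₂)) = (1 - χ) * Real.sqrt (g J₂ J₂) := by
    have h : g ((1 - χ) • J₂) ((1 - χ) • J₂) = (1 - χ) ^ 2 * g J₂ J₂ := by
      simp only [map_smul, LinearMap.smul_apply, smul_eq_mul]; ring
    rw [h, Real.sqrt_mul (by positivity), Real.sqrt_sq hχ1']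
  rw [hsq1, hsq2] at htri
  have hb1 : Real.sqrt (g J₁ J₁) ≤ (1 + (1 - χ) * c₁) * Real.sqrt (g₁ J₁ J₁) := by
    have hk : 0 ≤ (1 - χ) * c₁ := by positivity
    have hle : g J₁ J₁ ≤ (1 + (1 - χ) * c₁) ^ 2 * g₁ J₁ J₁ := by
      rw [hgeval]
      nlinarith [mul_le_mul_of_nonneg_left (h₁ J₁) hχ1',
        mul_nonneg hk (hpsd₁ J₁), mul_nonneg (mul_nonneg hk hk) (hpsd₁ J₁)]
    calc Real.sqrt (g J₁ J₁) ≤ Real.sqrt ((1 + (1 - χ) * c₁) ^ 2 * g₁ J₁ J₁) :=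
          Real.sqrt_le_sqrt hle
      _ = (1 + (1 - χ) * c₁) * Real.sqrt (g₁ J₁ J₁) := by
          rw [Real.sqrt_mul (by positivity), Real.sqrt_sq (by positivity)]
  have hb2 : Real.sqrt (g J₂ J₂) ≤ (1 + χ * c₂) * Real.sqrt (g₂ J₂ J₂) := by
    have hk : 0 ≤ χ * c₂ := by positivity
    have hle : g J₂ J₂ ≤ (1 + χ * c₂) ^ 2 * g₂ J₂ J₂ := by
      rw [hgeval]
      nlinarith [mul_le_mul_of_nonneg_left (h₂ J₂) hχ0,
        mul_nonneg hk (hpsd₂ J₂), mul_nonneg (mul_nonneg hk hk) (hpsd₂ J₂)]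
    calc Real.sqrt (g J₂ J₂) ≤ Real.sqrt ((1 + χ * c₂) ^ 2 * g₂ J₂ J₂) :=
          Real.sqrt_le_sqrt hle
      _ = (1 + χ * c₂) * Real.sqrt (g₂ J₂ J₂) := by
          rw [Real.sqrt_mul (by positivity), Real.sqrt_sq (by positivity)]
  have e1 : χ * Real.sqrt (g J₁ J₁) ≤ χ * ((1 + (1 - χ) * c₁) * Real.sqrt (g₁ J₁ J₁)) :=
    mul_le_mul_of_nonneg_left hb1 hχ0
  have e2 : (1 - χ) * Real.sqrt (g J₂ J₂) ≤
      (1 - χ) * ((1 + χ * c₂) * Real.sqrt (g₂ J₂ J₂)) :=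
    mul_le_mul_of_nonneg_left hb2 hχ1'
  have hring : χ * ((1 + (1 - χ) * c₁) * Real.sqrt (g₁ J₁ J₁))
      + (1 - χ) * ((1 + χ * c₂) * Real.sqrt (g₂ J₂ J₂))
      = χ * Real.sqrt (g₁ J₁ J₁) + (1 - χ) * Real.sqrt (g₂ J₂ J₂)
        + χ * (1 - χ) * (c₁ * Real.sqrt (g₁ J₁ J₁) + c₂ * Real.sqrt (g₂ J₂ J₂)) := by ring
  linarith
end

section
/- Let (M, dist) be a metric space and S ⊆ M a subset; for z ∈ M let δ(z) denote the infimum of distances from z to points of S. Suppose x ∈ M satisfies 0 < δ(x) ≤ 1/2. Then for every y ∈ M with dist(x, y) ≤ δ(x)², one has (1/4)·δ(y)² ≤ δ(x)² ≤ 4·δ(y)². -/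
/-- Weight comparability for `φ = d²` (Proposition 2.6(3)). -/
theorem stmt_3 {M : Type*} [MetricSpace M] (S : Set M) (x : M)
    (hx0 : 0 < Metric.infDist x S) (hx : Metric.infDist x S ≤ 1 / 2)
    (y : M) (hy : dist x y ≤ (Metric.infDist x S) ^ 2) :
    (1 / 4 : ℝ) * (Metric.infDist y S) ^ 2 ≤ (Metric.infDist x S) ^ 2 ∧
      (Metric.infDist x S) ^ 2 ≤ 4 * (Metric.infDist y S) ^ 2 := by
  set a := Metric.infDist x S with ha
  set b := Metric.infDist y S with hb
  have h1 : a ≤ b + dist x y := Metric.infDist_le_infDist_add_dist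
  have h2 : b ≤ a + dist y x := Metric.infDist_le_infDist_add_dist
  rw [dist_comm] at h2
  have hsq : a ^ 2 ≤ a / 2 := by nlinarith
  have hub : b ≤ (3 / 2) * a := by linarith
  have hlb : a / 2 ≤ b := by linarith
  have hbnn : 0 ≤ b := Metric.infDist_nonneg
  constructor <;> nlinarith [sq_nonneg (a - b)]
end

section
/- Let (M, dist) be a metric space and S ⊆ M a subset; for z ∈ M let δ(z) denote the infimum of distances from z to points of S. Let N > 0. Suppose x ∈ M satisfies 0 < δ(x) ≤ 1/2. Then for every y ∈ M with dist(x, y) ≤ δ(x)², one has exp(−2N)·exp(−N/δ(x)) ≤ exp(−N/δ(y)) ≤ exp(2N)·exp(−N/δ(x)). -/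
/-- Weight comparability for the exponential weight `ρ = exp(−N/d)`
(Proposition 2.6(3)). -/
theorem stmt_4 {M : Type*} [MetricSpace M] (S : Set M) (N : ℝ) (hN : 0 < N) (x : M)
    (hx0 : 0 < Metric.infDist x S) (hx : Metric.infDist x S ≤ 1 / 2)
    (y : M) (hy : dist x y ≤ (Metric.infDist x S) ^ 2) :
    Real.exp (-2 * N) * Real.exp (-N / Metric.infDist x S)
        ≤ Real.exp (-N / Metric.infDist y S) ∧
      Real.exp (-N / Metric.infDist y S)
        ≤ Real.exp (2 * N) * Real.exp (-N / Metric.infDist x S) := by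
  set a := Metric.infDist x S with ha
  set b := Metric.infDist y S with hb
  have h1 : b ≤ a + dist x y := by
    rw [dist_comm]; exact Metric.infDist_le_infDist_add_dist
  have h2 : a ≤ b + dist x y := Metric.infDist_le_infDist_add_dist
  have ha2 : a ^ 2 ≤ a / 2 := by nlinarith
  have hbge : a / 2 ≤ b := by nlinarith
  have hble : b ≤ 3 * a / 2 := by nlinarith
  have hb0 : 0 < b := by linarith
  have key1 : N / b - N / a ≤ 2 * N := by
    rw [div_sub_div _ _ hb0.ne' hx0.ne', div_le_iff₀ (by positivity)]
    nlinarith [mul_le_mul_of_nonneg_left (show a - b ≤ a ^ 2 by linarith) hN.le,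
      mul_le_mul_of_nonneg_left hbge (mul_pos hN hx0).le]
  have key2 : N / a - N / b ≤ 2 * N := by
    rw [div_sub_div _ _ hx0.ne' hb0.ne', div_le_iff₀ (by positivity)]
    nlinarith [mul_le_mul_of_nonneg_left (show b - a ≤ a ^ 2 by linarith) hN.le,
      mul_le_mul_of_nonneg_left hbge (mul_pos hN hx0).le]
  constructor
  · rw [← Real.exp_add]
    apply Real.exp_le_exp.2
    have e1 : -N / b = -(N / b) := by ring
    have e2 : -2 * N + -N / a = -(N / a + 2 * N) := by ring
    rw [e1, e2]
    have := neg_le_neg key2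
    linarith [neg_le_neg (show N / a - 2 * N ≤ N / b by linarith)]
  · rw [← Real.exp_add]
    apply Real.exp_le_exp.2
    have e1 : -N / b = -(N / b) := by ring
    have e2 : 2 * N + -N / a = -(N / a - 2 * N) := by ring
    rw [e1, e2]
    linarith
end
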